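/- For a separable function F(x) = Σᵢ gᵢ(xᵢ) with each gᵢ : ℝ → ℝ continuously differentiable, the Integrated Gradients attribution of feature i with baseline x' equals gᵢ(xᵢ) − gᵢ(x'ᵢ), and this coincides with the Shapley Value of feature i in the game v(S) = F(x_S) − F(x'), where x_S agrees with x on S and with x' elsewhere. -/

import Mathlib

/-!
Along the straight path from `x'` to `x` only the `i`-th summand of `F` moves in direction `eᵢ`,
so Integrated Gradients reduces to the fundamental theorem of calculus for `gᵢ`. In the game
`v`, adding `i` to any coalition changes only the `i`-th coordinate of the hybrid point, so every
marginal contribution equals `gᵢ (xᵢ) - gᵢ (x'ᵢ)`, and the Shapley weights sum to one.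
-/

open Finset

section Separable

variable {𝕜 ι : Type*} [NontriviallyNormedField 𝕜] [Fintype ι]

theorem hasFDerivAt_sum_comp_apply {g : ι → 𝕜 → 𝕜} (hg : ∀ j, Differentiable 𝕜 (g j))
    (y : ι → 𝕜) :
    HasFDerivAt (fun y : ι → 𝕜 => ∑ j, g j (y j))
      (∑ j, deriv (g j) (y j) • ContinuousLinearMap.proj (R := 𝕜) (φ := fun _ : ι => 𝕜) j) y :=
  HasFDerivAt.fun_sum fun j _ =>
    (hg j (y j)).hasDerivAt.comp_hasFDerivAt y (hasFDerivAt_apply j y)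

theorem fderiv_sum_comp_apply_single [DecidableEq ι] {g : ι → 𝕜 → 𝕜}
    (hg : ∀ j, Differentiable 𝕜 (g j)) (y : ι → 𝕜) (i : ι) :
    fderiv 𝕜 (fun y : ι → 𝕜 => ∑ j, g j (y j)) y (Pi.single i 1) = deriv (g i) (y i) := by
  simp [(hasFDerivAt_sum_comp_apply hg y).fderiv, Pi.single_apply]

theorem sum_comp_apply_update_sub [DecidableEq ι] (g : ι → 𝕜 → 𝕜) (y : ι → 𝕜) (i : ι) (t : 𝕜) :
    ∑ j, g j (Function.update y i t j) - ∑ j, g j (y j) = g i t - g i (y i) := by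
  rw [← sum_sub_distrib, sum_eq_single i (fun j _ hj => by simp [hj]) (by simp)]
  simp

end Separable

theorem ite_mem_insert_eq_update {ι β : Type*} [DecidableEq ι] (x x' : ι → β) {S : Finset ι}
    {i : ι} (hi : i ∉ S) :
    (fun j => if j ∈ insert i S then x j else x' j) =
      Function.update (fun j => if j ∈ S then x j else x' j) i (x i) := by
  ext j
  by_cases hj : j = i <;> simp [hj, hi]

theorem mul_integral_deriv_along_segment {h : ℝ → ℝ} (hh : ContDiff ℝ 1 h) (a b : ℝ) :
    (b - a) * ∫ α in (0 : ℝ)..1, deriv h (a + α * (b - a)) = h b - h a := by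
  have hpath : ∀ α : ℝ, HasDerivAt (fun t => a + t * (b - a)) (b - a) α := fun α => by
    simpa using ((hasDerivAt_id α).mul_const (b - a)).const_add a
  have hcomp : ∀ α ∈ Set.uIcc (0 : ℝ) 1, HasDerivAt (fun t => h (a + t * (b - a)))
      ((b - a) * deriv h (a + α * (b - a))) α := fun α _ => by
    rw [mul_comm]
    exact ((hh.differentiable one_ne_zero) _).hasDerivAt.comp α (hpath α)
  have hint : IntervalIntegrable (fun α => (b - a) * deriv h (a + α * (b - a)))
      MeasureTheory.volume 0 1 :=
    (continuous_const.mul ((hh.continuous_deriv le_rfl).comp (by fun_prop))).intervalIntegrable 0 1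
  rw [← intervalIntegral.integral_const_mul,
    intervalIntegral.integral_eq_sub_of_hasDerivAt hcomp hint]
  simp

open Nat in
theorem sum_powerset_factorial_mul_factorial_div {α : Type*} (s : Finset α) :
    ∑ S ∈ s.powerset, ((#S)! * (#s - #S)! : ℝ) / (#s + 1)! = 1 := by
  have hterm : ∀ m ∈ range (#s + 1),
      (#s).choose m • ((m ! * (#s - m)! : ℝ) / (#s + 1)!) = 1 / (#s + 1) := fun m hm => by
    have hchoose : ((#s).choose m * m ! * (#s - m)! : ℝ) = (#s)! := by
      exact_mod_cast choose_mul_factorial_mul_factorial (Nat.lt_succ_iff.1 (mem_range.1 hm))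
    rw [nsmul_eq_mul, ← mul_div_assoc, ← mul_assoc, hchoose, factorial_succ]
    push_cast
    field_simp
  rw [sum_powerset_apply_card (fun m => (m ! * (#s - m)! : ℝ) / (#s + 1)!), sum_congr rfl hterm,
    sum_const, card_range, nsmul_eq_mul]
  push_cast
  field_simp

open Nat in
theorem sum_shapley_weights {ι : Type*} [Fintype ι] [DecidableEq ι] (i : ι) :
    ∑ S ∈ (univ.erase i).powerset,
      ((#S)! * (Fintype.card ι - #S - 1)! : ℝ) / (Fintype.card ι)! = 1 := by
  have hcard : #(univ.erase i) + 1 = Fintype.card ι := card_erase_add_one (mem_univ i)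
  rw [← sum_powerset_factorial_mul_factorial_div (univ.erase i), hcard]
  refine sum_congr rfl fun S _ => ?_
  rw [← hcard, Nat.sub_right_comm, Nat.add_sub_cancel]

/-- For a separable `C¹` function `F x = Σᵢ gᵢ (xᵢ)`, the Integrated
Gradients attribution of feature `i` equals `gᵢ (xᵢ) - gᵢ (x'ᵢ)`, and this
coincides with the Shapley Value of feature `i` in the game
`v S = F (x_S) - F x'` where `x_S` agrees with `x` on `S` and `x'` elsewhere. -/
theorem ig_separable {n : ℕ} (g : Fin n → ℝ → ℝ)
    (hg : ∀ i, ContDiff ℝ 1 (g i))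
    (F : (Fin n → ℝ) → ℝ) (hF : ∀ y, F y = ∑ j, g j (y j))
    (x x' : Fin n → ℝ)
    (v : Finset (Fin n) → ℝ)
    (hv : ∀ S, v S = F (fun j => if j ∈ S then x j else x' j) - F x')
    (i : Fin n) :
    ((x i - x' i) *
      ∫ α in (0:ℝ)..1, fderiv ℝ F (x' + α • (x - x')) (Pi.single i 1) =
      g i (x i) - g i (x' i)) ∧
    ((x i - x' i) *
      ∫ α in (0:ℝ)..1, fderiv ℝ F (x' + α • (x - x')) (Pi.single i 1) =
     ∑ S ∈ ((Finset.univ : Finset (Fin n)).erase i).powerset,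
       (Nat.factorial S.card * Nat.factorial (n - S.card - 1) : ℝ) /
         Nat.factorial n * (v (insert i S) - v S)) := by
  have hig : (x i - x' i) * ∫ α in (0:ℝ)..1, fderiv ℝ F (x' + α • (x - x')) (Pi.single i 1) =
      g i (x i) - g i (x' i) := by
    have hpath : ∀ α : ℝ, fderiv ℝ F (x' + α • (x - x')) (Pi.single i 1) =
        deriv (g i) (x' i + α * (x i - x' i)) := fun α => by
      rw [funext hF, fderiv_sum_comp_apply_single fun j => (hg j).differentiable one_ne_zero]
      simp
    simp_rw [hpath]
    exact mul_integral_deriv_along_segment (hg i) _ _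
  have hmarginal : ∀ S ∈ (univ.erase i).powerset,
      v (insert i S) - v S = g i (x i) - g i (x' i) := fun S hS => by
    have hiS : i ∉ S := fun h => (mem_erase.1 (mem_powerset.1 hS h)).1 rfl
    rw [hv, hv, sub_sub_sub_cancel_right, ite_mem_insert_eq_update x x' hiS, hF, hF,
      sum_comp_apply_update_sub]
    simp [hiS]
  have hweights := sum_shapley_weights i
  rw [Fintype.card_fin] at hweights
  rw [sum_congr rfl fun S hS => by rw [hmarginal S hS], ← sum_mul, hweights, one_mul]
  exact ⟨hig, hig⟩
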